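/- arXiv:1709.00225 — 4 statements merged into one kernel-verified Lean document; each statement's English description precedes it below -/
import Mathlib

section
/- (The divergence of a solution of the massive wave equation satisfies a Klein–Gordon equation; equation (3.12) of the paper in abstract form.) If A, j ∈ V₁ satisfy the wave equation (P + Q + m²·id) A = j + (1/m²)·Q j for a real m > 0, then the element δ₁ A − (1/m²)·δ₁ j of V₀ satisfies the Klein–Gordon equation (δ₁ ∘ d₀ + m²·id)(δ₁ A − (1/m²)·δ₁ j) = 0. -/
/-!
Applying `δ₁` to the wave equation kills `P = δ₂ d₁` (as `δ₁ δ₂ = 0`) and turns `Q = d₀ δ₁` into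
`(δ₁ d₀) δ₁`, so `δ₁` intertwines the wave operator with the Klein–Gordon operator. The image of the
source, `δ₁ j + m⁻² δ₁ d₀ δ₁ j`, is the Klein–Gordon operator applied to `m⁻² δ₁ j`, and linearity
finishes the argument.
-/

section

variable {K V₀ V₁ V₂ : Type*} [Field K]
  [AddCommGroup V₀] [Module K V₀] [AddCommGroup V₁] [Module K V₁] [AddCommGroup V₂] [Module K V₂]

theorem LinearMap.comp_wave_eq_kleinGordon_comp (d₀ : V₀ →ₗ[K] V₁) (d₁ : V₁ →ₗ[K] V₂)
    (δ₁ : V₁ →ₗ[K] V₀) (δ₂ : V₂ →ₗ[K] V₁) (hδδ : δ₁ ∘ₗ δ₂ = 0) (c : K) :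
    δ₁ ∘ₗ (δ₂ ∘ₗ d₁ + d₀ ∘ₗ δ₁ + c • LinearMap.id) = (δ₁ ∘ₗ d₀ + c • LinearMap.id) ∘ₗ δ₁ := by
  ext x
  have hδδx : δ₁ (δ₂ (d₁ x)) = 0 := LinearMap.congr_fun hδδ (d₁ x)
  simp [hδδx]

theorem LinearMap.add_smul_id_apply_inv_smul {V : Type*} [AddCommGroup V] [Module K V]
    (L : V →ₗ[K] V) {c : K} (hc : c ≠ 0) (x : V) :
    (L + c • (LinearMap.id : V →ₗ[K] V)) (c⁻¹ • x) = x + c⁻¹ • L x := by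
  simp [smul_smul, hc, add_comm]

end

theorem divergence_satisfies_klein_gordon_general
    (V₀ V₁ V₂ : Type*)
    [AddCommGroup V₀] [Module ℂ V₀]
    [AddCommGroup V₁] [Module ℂ V₁]
    [AddCommGroup V₂] [Module ℂ V₂]
    (d₀ : V₀ →ₗ[ℂ] V₁) (d₁ : V₁ →ₗ[ℂ] V₂)
    (δ₁ : V₁ →ₗ[ℂ] V₀) (δ₂ : V₂ →ₗ[ℂ] V₁)
    (hδδ : δ₁ ∘ₗ δ₂ = 0)
    (P Q : V₁ →ₗ[ℂ] V₁)
    (hP : P = δ₂ ∘ₗ d₁) (hQ : Q = d₀ ∘ₗ δ₁)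
    (m : ℝ) (hm : 0 < m) (A j : V₁)
    (hwave : (P + Q + ((m : ℂ) ^ 2) • (LinearMap.id : V₁ →ₗ[ℂ] V₁)) A
      = j + (1 / (m : ℂ) ^ 2) • Q j) :
    (δ₁ ∘ₗ d₀ + ((m : ℂ) ^ 2) • (LinearMap.id : V₀ →ₗ[ℂ] V₀))
      (δ₁ A - (1 / (m : ℂ) ^ 2) • δ₁ j) = 0 := by
  have hm2 : (m : ℂ) ^ 2 ≠ 0 := pow_ne_zero 2 (Complex.ofReal_ne_zero.mpr hm.ne')
  have hdiv := congrArg δ₁ hwave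
  rw [← LinearMap.comp_apply, hP, hQ,
    LinearMap.comp_wave_eq_kleinGordon_comp d₀ d₁ δ₁ δ₂ hδδ, LinearMap.comp_apply] at hdiv
  have hsource : δ₁ (j + (1 / (m : ℂ) ^ 2) • (d₀ ∘ₗ δ₁) j)
      = (δ₁ ∘ₗ d₀ + ((m : ℂ) ^ 2) • (LinearMap.id : V₀ →ₗ[ℂ] V₀)) ((1 / (m : ℂ) ^ 2) • δ₁ j) := by
    rw [one_div, LinearMap.add_smul_id_apply_inv_smul _ hm2]
    simp
  rw [map_sub, sub_eq_zero, hdiv, hsource]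

/-- The divergence of a solution of the massive wave equation satisfies a
Klein–Gordon equation; equation (3.12) of the paper in abstract form. -/
theorem divergence_satisfies_klein_gordon
    (V₀ V₁ V₂ : Type*)
    [AddCommGroup V₀] [Module ℂ V₀]
    [AddCommGroup V₁] [Module ℂ V₁]
    [AddCommGroup V₂] [Module ℂ V₂]
    (d₀ : V₀ →ₗ[ℂ] V₁) (d₁ : V₁ →ₗ[ℂ] V₂)
    (δ₁ : V₁ →ₗ[ℂ] V₀) (δ₂ : V₂ →ₗ[ℂ] V₁)
    (hdd : d₁ ∘ₗ d₀ = 0) (hδδ : δ₁ ∘ₗ δ₂ = 0)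
    (P Q : V₁ →ₗ[ℂ] V₁)
    (hP : P = δ₂ ∘ₗ d₁) (hQ : Q = d₀ ∘ₗ δ₁)
    (m : ℝ) (hm : 0 < m) (A j : V₁)
    (hwave : (P + Q + ((m : ℂ) ^ 2) • (LinearMap.id : V₁ →ₗ[ℂ] V₁)) A
      = j + (1 / (m : ℂ) ^ 2) • Q j) :
    (δ₁ ∘ₗ d₀ + ((m : ℂ) ^ 2) • (LinearMap.id : V₀ →ₗ[ℂ] V₀))
      (δ₁ A - (1 / (m : ℂ) ^ 2) • δ₁ j) = 0 :=
  divergence_satisfies_klein_gordon_general V₀ V₁ V₂ d₀ d₁ δ₁ δ₂ hδδ P Q hP hQ m hm A j hwave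
end

section
/- (Fundamental solutions of the Proca operator from those of the wave operator; Lemma 3.9 of the paper in abstract form.) Let m > 0 be real and let E : V₁ → V₁ be a linear map that commutes with P and with Q and satisfies E ∘ (P + Q + m²·id) = id = (P + Q + m²·id) ∘ E. Then the linear map G := ((1/m²)·Q + id) ∘ E satisfies G ∘ (P + m²·id) = id = (P + m²·id) ∘ G. -/
/-- Fundamental solutions of the Proca operator from those of the wave operator;
Lemma 3.9 of the paper in abstract form. -/
theorem proca_fundamental_solution
    (V₀ V₁ V₂ : Type*)
    [AddCommGroup V₀] [Module ℂ V₀]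
    [AddCommGroup V₁] [Module ℂ V₁]
    [AddCommGroup V₂] [Module ℂ V₂]
    (d₀ : V₀ →ₗ[ℂ] V₁) (d₁ : V₁ →ₗ[ℂ] V₂)
    (δ₁ : V₁ →ₗ[ℂ] V₀) (δ₂ : V₂ →ₗ[ℂ] V₁)
    (hdd : d₁ ∘ₗ d₀ = 0) (hδδ : δ₁ ∘ₗ δ₂ = 0)
    (P Q : V₁ →ₗ[ℂ] V₁)
    (hP : P = δ₂ ∘ₗ d₁) (hQ : Q = d₀ ∘ₗ δ₁)
    (m : ℝ) (hm : 0 < m)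
    (E : V₁ →ₗ[ℂ] V₁)
    (hEP : E ∘ₗ P = P ∘ₗ E) (hEQ : E ∘ₗ Q = Q ∘ₗ E)
    (hE₁ : E ∘ₗ (P + Q + ((m : ℂ) ^ 2) • LinearMap.id) = LinearMap.id)
    (hE₂ : (P + Q + ((m : ℂ) ^ 2) • LinearMap.id) ∘ₗ E = LinearMap.id)
    (G : V₁ →ₗ[ℂ] V₁)
    (hG : G = ((1 / (m : ℂ) ^ 2) • Q + LinearMap.id) ∘ₗ E) :
    G ∘ₗ (P + ((m : ℂ) ^ 2) • LinearMap.id) = LinearMap.id ∧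
      (P + ((m : ℂ) ^ 2) • LinearMap.id) ∘ₗ G = LinearMap.id := by
  have hc : ((m : ℂ) ^ 2) ≠ 0 := by
    have : (m : ℂ) ≠ 0 := by exact_mod_cast hm.ne'
    exact pow_ne_zero 2 this
  have hPQ : P ∘ₗ Q = 0 := by
    ext x
    have h := LinearMap.ext_iff.mp hdd (δ₁ x)
    simp only [LinearMap.comp_apply, LinearMap.zero_apply] at h ⊢
    simp [hP, hQ, h]
  have hQP : Q ∘ₗ P = 0 := by
    ext x
    have h := LinearMap.ext_iff.mp hδδ (d₁ x)
    simp only [LinearMap.comp_apply, LinearMap.zero_apply] at h ⊢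
    simp [hP, hQ, h]
  -- switch to ring language in Module.End
  simp only [← Module.End.one_eq_id, ← Module.End.mul_eq_comp] at *
  constructor
  · have key : ((1 / (m : ℂ) ^ 2) • Q + 1) * E = E * ((1 / (m : ℂ) ^ 2) • Q + 1) := by
      rw [mul_add, add_mul, mul_one, one_mul, mul_smul_comm, smul_mul_assoc, hEQ]
    rw [hG, key, mul_assoc]
    have expand : ((1 / (m : ℂ) ^ 2) • Q + 1) * (P + (m : ℂ) ^ 2 • 1) =
        P + Q + (m : ℂ) ^ 2 • 1 := by
      rw [add_mul, mul_add, mul_add, one_mul, one_mul, smul_mul_assoc, smul_mul_assoc,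
        hQP, smul_zero, zero_add, mul_smul_comm, mul_one, smul_smul,
        one_div_mul_cancel hc, one_smul]
      abel
    rw [expand, hE₁]
  · rw [hG, ← mul_assoc]
    have expand : (P + (m : ℂ) ^ 2 • 1) * ((1 / (m : ℂ) ^ 2) • Q + 1) =
        P + Q + (m : ℂ) ^ 2 • 1 := by
      rw [mul_add, add_mul, add_mul, mul_one, mul_one, mul_smul_comm, mul_smul_comm,
        hPQ, smul_zero, zero_add, smul_mul_assoc, one_mul, smul_smul,
        one_div_mul_cancel hc, one_smul]
      abel
    rw [expand, hE₂]
end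

section
/- (Closed test one-forms are annihilated by the source-free Proca propagator; key step of Theorem 3.15 of the paper in abstract form.) Let m > 0 be real and let E⁺, E⁻ : V₁ → V₁ be linear maps, each commuting with Q and each satisfying E^± ∘ (P + Q + m²·id) = id. Put G := ((1/m²)·Q + id) ∘ (E⁻ − E⁺). Then for every F ∈ V₁ with d₁ F = 0 one has G F = 0. -/
/-- Closed test one-forms are annihilated by the source-free Proca propagator;
key step of Theorem 3.15 of the paper in abstract form. -/
theorem closed_forms_annihilated_by_proca_propagator
    (V₀ V₁ V₂ : Type*)
    [AddCommGroup V₀] [Module ℂ V₀]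
    [AddCommGroup V₁] [Module ℂ V₁]
    [AddCommGroup V₂] [Module ℂ V₂]
    (d₀ : V₀ →ₗ[ℂ] V₁) (d₁ : V₁ →ₗ[ℂ] V₂)
    (δ₁ : V₁ →ₗ[ℂ] V₀) (δ₂ : V₂ →ₗ[ℂ] V₁)
    (hdd : d₁ ∘ₗ d₀ = 0) (hδδ : δ₁ ∘ₗ δ₂ = 0)
    (P Q : V₁ →ₗ[ℂ] V₁)
    (hP : P = δ₂ ∘ₗ d₁) (hQ : Q = d₀ ∘ₗ δ₁)
    (m : ℝ) (hm : 0 < m)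
    (Eplus Eminus : V₁ →ₗ[ℂ] V₁)
    (hEplusQ : Eplus ∘ₗ Q = Q ∘ₗ Eplus)
    (hEminusQ : Eminus ∘ₗ Q = Q ∘ₗ Eminus)
    (hEplus : Eplus ∘ₗ (P + Q + ((m : ℂ) ^ 2) • LinearMap.id) = LinearMap.id)
    (hEminus : Eminus ∘ₗ (P + Q + ((m : ℂ) ^ 2) • LinearMap.id) = LinearMap.id)
    (G : V₁ →ₗ[ℂ] V₁)
    (hG : G = ((1 / (m : ℂ) ^ 2) • Q + LinearMap.id) ∘ₗ (Eminus - Eplus)) :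
    ∀ F : V₁, d₁ F = 0 → G F = 0 := by
  intro F hF
  have hm2 : ((m : ℂ) ^ 2) ≠ 0 := by
    have : (m : ℂ) ≠ 0 := by exact_mod_cast hm.ne'
    exact pow_ne_zero 2 this
  have hPF : P F = 0 := by
    rw [hP]; simp [LinearMap.comp_apply, hF]
  have h1 := LinearMap.congr_fun hEplus F
  have h2 := LinearMap.congr_fun hEminus F
  simp only [LinearMap.comp_apply, LinearMap.add_apply, LinearMap.smul_apply,
    LinearMap.id_apply, hPF, zero_add, map_add, map_smul] at h1 h2
  have hcp := LinearMap.congr_fun hEplusQ F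
  have hcm := LinearMap.congr_fun hEminusQ F
  simp only [LinearMap.comp_apply] at hcp hcm
  have heq : Q (Eminus F) + (m : ℂ) ^ 2 • Eminus F
      = Q (Eplus F) + (m : ℂ) ^ 2 • Eplus F := by
    rw [← hcp, ← hcm]
    calc Eminus (Q F) + (m : ℂ) ^ 2 • Eminus F = F := h2
      _ = Eplus (Q F) + (m : ℂ) ^ 2 • Eplus F := h1.symm
  have key : Q (Eminus F - Eplus F) = -(((m : ℂ) ^ 2) • (Eminus F - Eplus F)) := by
    rw [map_sub, smul_sub, neg_sub, sub_eq_sub_iff_add_eq_add]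
    rw [heq]; abel
  rw [hG]
  simp only [LinearMap.comp_apply, LinearMap.sub_apply, LinearMap.add_apply,
    LinearMap.smul_apply, LinearMap.id_apply]
  rw [key, smul_neg, smul_smul]
  rw [one_div, inv_mul_cancel₀ hm2, one_smul]
  abel
end

section
/- (Sufficiency computation for the existence of the classical zero-mass limit; Lemma 3.13 of the paper, sufficiency direction, in abstract form.) Let m > 0 be real, let E⁺, E⁻ : V₁ → V₁ be linear maps satisfying E^± ∘ (P + Q + m²·id) = id, and set E := E⁻ − E⁺. If F ∈ V₁ decomposes as F = F' + F'' with d₁ F' = 0 and δ₁ F'' = 0, then (1/m²)·E(Q F) = −E F'. -/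
/-- Sufficiency computation for the existence of the classical zero-mass limit;
Lemma 3.13 of the paper, sufficiency direction, in abstract form. -/
theorem zero_mass_limit_sufficiency
    (V₀ V₁ V₂ : Type*)
    [AddCommGroup V₀] [Module ℂ V₀]
    [AddCommGroup V₁] [Module ℂ V₁]
    [AddCommGroup V₂] [Module ℂ V₂]
    (d₀ : V₀ →ₗ[ℂ] V₁) (d₁ : V₁ →ₗ[ℂ] V₂)
    (δ₁ : V₁ →ₗ[ℂ] V₀) (δ₂ : V₂ →ₗ[ℂ] V₁)
    (hdd : d₁ ∘ₗ d₀ = 0) (hδδ : δ₁ ∘ₗ δ₂ = 0)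
    (P Q : V₁ →ₗ[ℂ] V₁)
    (hP : P = δ₂ ∘ₗ d₁) (hQ : Q = d₀ ∘ₗ δ₁)
    (m : ℝ) (hm : 0 < m)
    (Eplus Eminus : V₁ →ₗ[ℂ] V₁)
    (hEplus : Eplus ∘ₗ (P + Q + ((m : ℂ) ^ 2) • LinearMap.id) = LinearMap.id)
    (hEminus : Eminus ∘ₗ (P + Q + ((m : ℂ) ^ 2) • LinearMap.id) = LinearMap.id)
    (E : V₁ →ₗ[ℂ] V₁) (hE : E = Eminus - Eplus)
    (F F' F'' : V₁) (hF : F = F' + F'')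
    (hF' : d₁ F' = 0) (hF'' : δ₁ F'' = 0) :
    (1 / (m : ℂ) ^ 2) • E (Q F) = -(E F') := by
  have hm2 : ((m : ℂ) ^ 2) ≠ 0 := by
    simpa using pow_ne_zero 2 (by exact_mod_cast hm.ne' : (m : ℂ) ≠ 0)
  -- E annihilates the wave operator
  have hEwave : E ∘ₗ (P + Q + ((m : ℂ) ^ 2) • LinearMap.id) = 0 := by
    rw [hE, LinearMap.sub_comp, hEplus, hEminus, sub_self]
  -- Q F = Q F'
  have hQF : Q F = Q F' := by
    have : Q F'' = 0 := by
      rw [hQ]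
      simp [LinearMap.comp_apply, hF'']
    rw [hF, map_add, this, add_zero]
  -- P F' = 0
  have hPF' : P F' = 0 := by
    rw [hP]
    simp [LinearMap.comp_apply, hF']
  -- apply hEwave to F'
  have key : E (Q F') + ((m : ℂ) ^ 2) • E F' = 0 := by
    have := congrArg (fun f => f F') hEwave
    simp only [LinearMap.comp_apply, LinearMap.add_apply, LinearMap.smul_apply,
      LinearMap.id_apply, LinearMap.zero_apply] at this
    rw [hPF'] at this
    simpa [map_add, map_smul] using this
  have hEQ : E (Q F') = -(((m : ℂ) ^ 2) • E F') := by linear_combination (norm := module) key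
  rw [hQF, hEQ, smul_neg, smul_smul, one_div, inv_mul_cancel₀ hm2, one_smul]
end
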